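/- Let c = (c1,c2) and c' = (c'1,c'2) ∈ O² be primitive pairs and d, d' ∈ O monic. (i) Suppose a/r lies on L(d·c) and a'/r' lies on L(d'·c'), with max(|d·c1|,|d·c2|)² ≤ |r| and max(|d'·c'1|,|d'·c'2|)² ≤ |r'|, and |a/r − a'/r'| < max(max(|d·c1|,|d·c2|), max(|d'·c'1|,|d'·c'2|))/(|r|·|r'|), where the difference is the coordinatewise maximum of absolute values in F_q(t) ⊂ K_∞. Then a·r' = a'·r (so a/r = a'/r' as points, and hence (a,r) = (a',r')). (ii) Suppose a/r lies on both L(d·c) and L(d'·c'), with max(|d·c1|,|d·c2|)² ≤ |r|, max(|d'·c'1|,|d'·c'2|)² ≤ |r|, and |c1·c'2| < |r|/(|d|·|d'|) and |c2·c'1| < |r|/(|d|·|d'|). Then d·c = d'·c' in O², and consequently d = d' and c = c'. -/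

import Mathlib

set_option autoImplicit false

noncomputable section

open Polynomial Matrix
open scoped Classical

variable {Fq : Type} [Field Fq] [Fintype Fq]

/-- The absolute value on `O = Fq[t]`: `|x| = q ^ deg x` for `x ≠ 0`, and `|0| = 0`. -/
def Oabs (x : Fq[X]) : ℝ := if x = 0 then 0 else (Fintype.card Fq : ℝ) ^ x.natDegree

/-- The maximum norm on pairs of polynomials. -/
def Oabs2 (a : Fq[X] × Fq[X]) : ℝ := max (Oabs a.1) (Oabs a.2)

/-- A pair `c = (c₁, c₂)` is primitive if `gcd(c₁,c₂) = 1` and either `c₁` is monic,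
or `c₁ = 0` and `c₂` is monic. -/
def Primitive (c : Fq[X] × Fq[X]) : Prop :=
  IsCoprime c.1 c.2 ∧ (c.1.Monic ∨ (c.1 = 0 ∧ c.2.Monic))

/-- `gcd(a, b, r) = 1`: every common divisor of `a`, `b` and `r` is a unit. -/
def CoprimeTriple (a b r : Fq[X]) : Prop :=
  ∀ p : Fq[X], p ∣ a → p ∣ b → p ∣ r → IsUnit p

/-- `a/r` lies on the generalised line `L(d·c)`: there is `k` with
`d(c₁a₁ + c₂a₂) = k·r` and `gcd(d,k) = 1`. -/
def OnLine (d : Fq[X]) (c : Fq[X] × Fq[X]) (r : Fq[X]) (a : Fq[X] × Fq[X]) : Prop :=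
  ∃ k : Fq[X], d * (c.1 * a.1 + c.2 * a.2) = k * r ∧ IsCoprime d k

/-- The embedding of `O = Fq[t]` into its fraction field `Fq(t)`. -/
def toR : Fq[X] →+* RatFunc Fq := algebraMap _ _

/-- The absolute value at infinity on `Fq(t)`: `|f| = q^{deg num f - deg denom f}`. -/
def Rabs (f : RatFunc Fq) : ℝ :=
  if f = 0 then 0 else (Fintype.card Fq : ℝ) ^ f.intDegree

/-! Everything rests on one principle: a polynomial divisible by `r` and of absolute value less
than `|r|` vanishes.

(i) Put `δ = a r' − a' r`. If `a/r ∈ L(d·c)`, then `r` divides `d (c·δ)`, which is smaller than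
`|d·c|² ≤ |r|`; so `c·δ = 0` and, `c` being primitive, `δ = s (c₂, −c₁)`. The line equation
`d (c·a) = k r` turns into `s k = d (a₁a'₂ − a₂a'₁)`, so `d ∣ s` because `gcd(d, k) = 1`, while
`|s| |c| = |δ| < |d| |c|`; hence `s = 0`. Since `gcd(a, r) = gcd(a', r') = 1` and `r, r'` are monic,
`a r' = a' r` forces `(a, r) = (a', r')`.

(ii) Eliminating `c·a` between the two line equations shows that `r` divides
`d d' (c₁c'₂ − c₂c'₁) aᵢ` for `i = 1, 2`, hence `d d' (c₁c'₂ − c₂c'₁)`, which is smaller than `|r|`.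
So `c` and `c'` are proportional, hence equal by normalisation, and then the line equations give
`d k' = d' k`, whence `d = d'`. -/

theorem IsCoprime.exists_eq_mul_of_mul_add_mul_eq_zero {R : Type*} [CommRing R] {x y a b : R}
    (h : IsCoprime x y) (hab : x * a + y * b = 0) : ∃ s, a = y * s ∧ b = -(x * s) := by
  obtain ⟨u, v, huv⟩ := h
  exact ⟨v * a - u * b, by linear_combination (-a) * huv + u * hab,
    by linear_combination v * hab - b * huv⟩

section Divisibility

variable {K : Type} [Field K]

theorem CoprimeTriple.dvd_of_dvd_mul {a b r x : K[X]} (h : CoprimeTriple a b r)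
    (ha : r ∣ x * a) (hb : r ∣ x * b) : r ∣ x := by
  have hrel : IsRelPrime r (gcd a b) := fun p hpr hpg =>
    h p (hpg.trans (gcd_dvd_left a b)) (hpg.trans (gcd_dvd_right a b)) hpr
  exact hrel.dvd_of_dvd_mul_right ((dvd_gcd ha hb).trans (gcd_mul_left' x a b).dvd)

theorem eq_of_mul_eq_mul_of_coprimeTriple {r r' : K[X]} {a a' : K[X] × K[X]}
    (hr : r.Monic) (hr' : r'.Monic)
    (ha : CoprimeTriple a.1 a.2 r) (ha' : CoprimeTriple a'.1 a'.2 r')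
    (h₁ : a.1 * r' = a'.1 * r) (h₂ : a.2 * r' = a'.2 * r) : a = a' ∧ r = r' := by
  have hrr' : r ∣ r' := ha.dvd_of_dvd_mul ⟨a'.1, by linear_combination h₁⟩
    ⟨a'.2, by linear_combination h₂⟩
  have hr'r : r' ∣ r := ha'.dvd_of_dvd_mul ⟨a.1, by linear_combination -h₁⟩
    ⟨a.2, by linear_combination -h₂⟩
  obtain rfl : r = r' := eq_of_monic_of_associated hr hr' (associated_of_dvd_dvd hrr' hr'r)
  exact ⟨Prod.ext (mul_right_cancel₀ hr.ne_zero h₁) (mul_right_cancel₀ hr.ne_zero h₂), rfl⟩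

theorem Primitive.fst_monic {c : K[X] × K[X]} (hc : Primitive c) (h : c.1 ≠ 0) : c.1.Monic :=
  hc.2.resolve_right fun h' => h h'.1

theorem Primitive.snd_monic {c : K[X] × K[X]} (hc : Primitive c) (h : c.1 = 0) : c.2.Monic :=
  (hc.2.resolve_left fun h' => h'.ne_zero h).2

theorem Primitive.eq_of_mul_eq_mul {c c' : K[X] × K[X]} (hc : Primitive c) (hc' : Primitive c')
    (h : c.1 * c'.2 = c.2 * c'.1) : c = c' := by
  have h₁ : Associated c.1 c'.1 := associated_of_dvd_dvd
    (hc.1.dvd_of_dvd_mul_left ⟨c'.2, h.symm⟩)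
    (hc'.1.dvd_of_dvd_mul_left ⟨c.2, by linear_combination h⟩)
  have h₂ : Associated c.2 c'.2 := associated_of_dvd_dvd
    (hc.1.symm.dvd_of_dvd_mul_left ⟨c'.1, h⟩)
    (hc'.1.symm.dvd_of_dvd_mul_left ⟨c.1, by linear_combination -h⟩)
  by_cases h0 : c.1 = 0
  · have h0' : c'.1 = 0 := h₁.eq_zero_iff.mp h0
    exact Prod.ext (h0.trans h0'.symm)
      (eq_of_monic_of_associated (hc.snd_monic h0) (hc'.snd_monic h0') h₂)
  · have e₁ : c.1 = c'.1 := eq_of_monic_of_associated (hc.fst_monic h0)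
      (hc'.fst_monic fun h0' => h0 (h₁.eq_zero_iff.mpr h0')) h₁
    refine Prod.ext e₁ (mul_left_cancel₀ h0 ?_)
    rw [e₁] at h ⊢
    linear_combination -h

theorem OnLine.eq_of_onLine {d d' r : K[X]} {c a : K[X] × K[X]} (hd : d.Monic) (hd' : d'.Monic)
    (hr : r ≠ 0) (hl : OnLine d c r a) (hl' : OnLine d' c r a) : d = d' := by
  obtain ⟨k, hk, hdk⟩ := hl
  obtain ⟨k', hk', hdk'⟩ := hl'
  have h : d * k' = d' * k := mul_right_cancel₀ hr (by linear_combination d' * hk - d * hk')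
  exact eq_of_monic_of_associated hd hd' (associated_of_dvd_dvd
    (hdk.dvd_of_dvd_mul_right ⟨k', h.symm⟩) (hdk'.dvd_of_dvd_mul_right ⟨k, h⟩))

end Divisibility

theorem Oabs_nonneg (x : Fq[X]) : 0 ≤ Oabs x := by
  unfold Oabs; split_ifs <;> positivity

theorem Oabs_pos {x : Fq[X]} (hx : x ≠ 0) : 0 < Oabs x := by
  rw [Oabs, if_neg hx]; positivity

theorem Oabs_mul (x y : Fq[X]) : Oabs (x * y) = Oabs x * Oabs y := by
  rcases eq_or_ne x 0 with rfl | hx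
  · simp [Oabs]
  rcases eq_or_ne y 0 with rfl | hy
  · simp [Oabs]
  simp only [Oabs, mul_ne_zero hx hy, hx, hy, if_false, natDegree_mul hx hy, pow_add]

theorem Oabs_neg (x : Fq[X]) : Oabs (-x) = Oabs x := by
  simp only [Oabs, neg_eq_zero, natDegree_neg]

theorem Oabs_sub_comm (x y : Fq[X]) : Oabs (x - y) = Oabs (y - x) := by
  rw [← Oabs_neg, neg_sub]

theorem Oabs_add_le (x y : Fq[X]) : Oabs (x + y) ≤ max (Oabs x) (Oabs y) := by
  rcases eq_or_ne x 0 with rfl | hx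
  · simp
  rcases eq_or_ne y 0 with rfl | hy
  · simp
  rcases eq_or_ne (x + y) 0 with hxy | hxy
  · rw [hxy, Oabs, if_pos rfl]; exact le_max_of_le_left (Oabs_nonneg x)
  have hmono : Monotone fun n : ℕ => (Fintype.card Fq : ℝ) ^ n :=
    pow_right_mono₀ (by exact_mod_cast Fintype.one_lt_card.le)
  simp only [Oabs, hxy, hx, hy, if_false]
  exact (hmono (natDegree_add_le x y)).trans_eq hmono.map_max

theorem Oabs_sub_le (x y : Fq[X]) : Oabs (x - y) ≤ max (Oabs x) (Oabs y) := by
  simpa only [sub_eq_add_neg, Oabs_neg] using Oabs_add_le x (-y)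

theorem Oabs_le_of_dvd {x y : Fq[X]} (h : x ∣ y) (hy : y ≠ 0) : Oabs x ≤ Oabs y := by
  have hx : x ≠ 0 := by rintro rfl; exact hy (zero_dvd_iff.mp h)
  rw [Oabs, Oabs, if_neg hx, if_neg hy]
  exact pow_le_pow_right₀ (by exact_mod_cast Fintype.one_lt_card.le) (natDegree_le_of_dvd h hy)

theorem eq_zero_of_dvd_of_Oabs_lt {r z : Fq[X]} (h : r ∣ z) (hlt : Oabs z < Oabs r) : z = 0 := by
  by_contra hz
  exact (Oabs_le_of_dvd h hz).not_gt hlt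

theorem Oabs2_nonneg (a : Fq[X] × Fq[X]) : 0 ≤ Oabs2 a :=
  le_max_of_le_left (Oabs_nonneg a.1)

theorem Oabs2_mul_left (d : Fq[X]) (c : Fq[X] × Fq[X]) :
    Oabs2 (d * c.1, d * c.2) = Oabs d * Oabs2 c := by
  simp only [Oabs2, Oabs_mul, mul_max_of_nonneg _ _ (Oabs_nonneg d)]

theorem Oabs_mul_add_mul_le (x y : Fq[X] × Fq[X]) :
    Oabs (x.1 * y.1 + x.2 * y.2) ≤ Oabs2 x * Oabs2 y := by
  refine (Oabs_add_le _ _).trans (max_le ?_ ?_) <;> rw [Oabs_mul]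
  · exact mul_le_mul (le_max_left _ _) (le_max_left _ _) (Oabs_nonneg _) (Oabs2_nonneg x)
  · exact mul_le_mul (le_max_right _ _) (le_max_right _ _) (Oabs_nonneg _) (Oabs2_nonneg x)

theorem Rabs_toR (x : Fq[X]) : Rabs (toR x) = Oabs x := by
  simp [Rabs, Oabs, toR, RatFunc.intDegree_polynomial]

theorem Rabs_div (f g : RatFunc Fq) : Rabs (f / g) = Rabs f / Rabs g := by
  rcases eq_or_ne f 0 with rfl | hf
  · simp [Rabs]
  rcases eq_or_ne g 0 with rfl | hg
  · simp [Rabs]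
  simp only [Rabs, div_ne_zero hf hg, hf, hg, if_false, RatFunc.intDegree_div hf hg]
  exact zpow_sub₀ (by positivity) _ _

theorem Rabs_div_sub_div {r r' : Fq[X]} (hr : r ≠ 0) (hr' : r' ≠ 0) (x x' : Fq[X]) :
    Rabs (toR x / toR r - toR x' / toR r') = Oabs (x * r' - x' * r) / (Oabs r * Oabs r') := by
  have hR : ∀ {y : Fq[X]}, y ≠ 0 → toR y ≠ 0 := fun hy => RatFunc.algebraMap_ne_zero hy
  rw [div_sub_div _ _ (hR hr) (hR hr'), ← map_mul, ← map_mul, ← map_mul, ← map_sub, Rabs_div,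
    Rabs_toR, Rabs_toR, Oabs_mul, mul_comm r x']

theorem mul_eq_mul_of_onLine_of_Oabs2_lt {c : Fq[X] × Fq[X]} (hc : IsCoprime c.1 c.2)
    {d r r' : Fq[X]} {a a' : Fq[X] × Fq[X]} (hr : r ≠ 0) (hl : OnLine d c r a)
    (hN : Oabs2 (d * c.1, d * c.2) ^ 2 ≤ Oabs r)
    (hδ : Oabs2 (a.1 * r' - a'.1 * r, a.2 * r' - a'.2 * r) < Oabs2 (d * c.1, d * c.2)) :
    a.1 * r' = a'.1 * r ∧ a.2 * r' = a'.2 * r := by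
  obtain ⟨k, hk, hdk⟩ := hl
  set δ : Fq[X] × Fq[X] := (a.1 * r' - a'.1 * r, a.2 * r' - a'.2 * r)
  have hNpos : 0 < Oabs2 (d * c.1, d * c.2) := (Oabs2_nonneg δ).trans_lt hδ
  have hd : d ≠ 0 := by
    rintro rfl
    simp [Oabs2, Oabs] at hNpos
  have hdot : c.1 * δ.1 + c.2 * δ.2 = 0 := by
    have hdvd : r ∣ (d * c.1) * δ.1 + (d * c.2) * δ.2 :=
      ⟨k * r' - d * (c.1 * a'.1 + c.2 * a'.2), by linear_combination r' * hk⟩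
    have hlt : Oabs ((d * c.1) * δ.1 + (d * c.2) * δ.2) < Oabs r := calc
      _ ≤ Oabs2 (d * c.1, d * c.2) * Oabs2 δ := Oabs_mul_add_mul_le (d * c.1, d * c.2) δ
      _ < Oabs2 (d * c.1, d * c.2) ^ 2 := by rw [sq]; exact mul_lt_mul_of_pos_left hδ hNpos
      _ ≤ Oabs r := hN
    have h0 : d * (c.1 * δ.1 + c.2 * δ.2) = 0 := by
      linear_combination eq_zero_of_dvd_of_Oabs_lt hdvd hlt
    exact (mul_eq_zero.mp h0).resolve_left hd
  obtain ⟨s, hs₁, hs₂⟩ := hc.exists_eq_mul_of_mul_add_mul_eq_zero hdot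
  simp only [δ] at hs₁ hs₂
  -- Feeding `δ = s (c₂, -c₁)` into the line equation gives `s k = d (a₁a'₂ - a₂a'₁)`.
  have hds : d ∣ s := hdk.dvd_of_dvd_mul_right ⟨a.1 * a'.2 - a.2 * a'.1,
    mul_right_cancel₀ hr (by linear_combination (-s) * hk - d * a.2 * hs₁ + d * a.1 * hs₂)⟩
  have hs : s = 0 := by
    by_contra hs
    have hδs : Oabs2 δ = Oabs s * Oabs2 c := by
      rw [show δ = (s * (c.2, -c.1).1, s * (c.2, -c.1).2) from
        Prod.ext (hs₁.trans (mul_comm _ _)) (hs₂.trans (by ring)),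
        Oabs2_mul_left, Oabs2, Oabs2, Oabs_neg, max_comm]
    have := mul_le_mul_of_nonneg_right (Oabs_le_of_dvd hds hs) (Oabs2_nonneg c)
    rw [← Oabs2_mul_left, ← hδs] at this
    exact this.not_gt hδ
  simp only [hs, mul_zero, neg_zero, sub_eq_zero] at hs₁ hs₂
  exact ⟨hs₁, hs₂⟩

theorem eq_of_onLine_of_dist_lt {c c' : Fq[X] × Fq[X]} (hc : Primitive c) (hc' : Primitive c')
    {d d' r r' : Fq[X]} {a a' : Fq[X] × Fq[X]} (hr : r.Monic) (hr' : r'.Monic)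
    (ha : CoprimeTriple a.1 a.2 r) (hl : OnLine d c r a)
    (ha' : CoprimeTriple a'.1 a'.2 r') (hl' : OnLine d' c' r' a')
    (hN : Oabs2 (d * c.1, d * c.2) ^ 2 ≤ Oabs r) (hN' : Oabs2 (d' * c'.1, d' * c'.2) ^ 2 ≤ Oabs r')
    (hdist : max (Rabs (toR a.1 / toR r - toR a'.1 / toR r'))
        (Rabs (toR a.2 / toR r - toR a'.2 / toR r'))
      < max (Oabs2 (d * c.1, d * c.2)) (Oabs2 (d' * c'.1, d' * c'.2)) / (Oabs r * Oabs r')) :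
    a.1 * r' = a'.1 * r ∧ a.2 * r' = a'.2 * r ∧ a = a' ∧ r = r' := by
  have hrr' : 0 < Oabs r * Oabs r' := mul_pos (Oabs_pos hr.ne_zero) (Oabs_pos hr'.ne_zero)
  rw [Rabs_div_sub_div hr.ne_zero hr'.ne_zero, Rabs_div_sub_div hr.ne_zero hr'.ne_zero,
    max_div_div_right hrr'.le, div_lt_div_iff_of_pos_right hrr'] at hdist
  have hcross : a.1 * r' = a'.1 * r ∧ a.2 * r' = a'.2 * r := by
    rcases le_total (Oabs2 (d' * c'.1, d' * c'.2)) (Oabs2 (d * c.1, d * c.2)) with h | h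
    · exact mul_eq_mul_of_onLine_of_Oabs2_lt hc.1 hr.ne_zero hl hN
        (hdist.trans_le (max_le le_rfl h))
    · have hδ : Oabs2 (a'.1 * r - a.1 * r', a'.2 * r - a.2 * r') <
          Oabs2 (d' * c'.1, d' * c'.2) := by
        rw [Oabs2, Oabs_sub_comm, Oabs_sub_comm (a'.2 * r)]
        exact hdist.trans_le (max_le h le_rfl)
      obtain ⟨h₁, h₂⟩ := mul_eq_mul_of_onLine_of_Oabs2_lt hc'.1 hr'.ne_zero hl' hN' hδ
      exact ⟨h₁.symm, h₂.symm⟩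
  exact ⟨hcross.1, hcross.2, eq_of_mul_eq_mul_of_coprimeTriple hr hr' ha ha' hcross.1 hcross.2⟩

theorem mul_eq_mul_of_onLine_of_onLine {c c' : Fq[X] × Fq[X]} {d d' r : Fq[X]}
    {a : Fq[X] × Fq[X]} (ha : CoprimeTriple a.1 a.2 r) (hl : OnLine d c r a)
    (hl' : OnLine d' c' r a) (h₁₂ : Oabs (c.1 * c'.2) < Oabs r / (Oabs d * Oabs d'))
    (h₂₁ : Oabs (c.2 * c'.1) < Oabs r / (Oabs d * Oabs d')) :
    c.1 * c'.2 = c.2 * c'.1 := by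
  obtain ⟨k, hk, -⟩ := hl
  obtain ⟨k', hk', -⟩ := hl'
  have hdd' : 0 < Oabs d * Oabs d' := by
    by_contra! h
    rw [le_antisymm h (mul_nonneg (Oabs_nonneg d) (Oabs_nonneg d')), div_zero] at h₁₂
    exact (Oabs_nonneg _).not_gt h₁₂
  have hdvd : r ∣ d * d' * (c.1 * c'.2 - c.2 * c'.1) := ha.dvd_of_dvd_mul
    ⟨d' * c'.2 * k - d * c.2 * k', by linear_combination (d' * c'.2) * hk - (d * c.2) * hk'⟩
    ⟨d * c.1 * k' - d' * c'.1 * k, by linear_combination (d * c.1) * hk' - (d' * c'.1) * hk⟩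
  have hlt : Oabs (d * d' * (c.1 * c'.2 - c.2 * c'.1)) < Oabs r := by
    rw [Oabs_mul, Oabs_mul, ← lt_div_iff₀' hdd']
    exact (Oabs_sub_le _ _).trans_lt (max_lt h₁₂ h₂₁)
  have hne : d * d' ≠ 0 := by
    rintro h
    rw [← Oabs_mul, h] at hdd'
    simp [Oabs] at hdd'
  exact sub_eq_zero.mp ((mul_eq_zero.mp (eq_zero_of_dvd_of_Oabs_lt hdvd hlt)).resolve_left hne)

/-- Repulsion of generalised lines:
(i) if `a/r ∈ L(d·c)` and `a'/r' ∈ L(d'·c')` with `|d·c|² ≤ |r|`, `|d'·c'|² ≤ |r'|`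
and `|a/r − a'/r'| < max(|d·c|, |d'·c'|)/(|r||r'|)`, then `a/r = a'/r'` and hence
`(a,r) = (a',r')`; (ii) if `a/r` lies on both `L(d·c)` and `L(d'·c')` with
`|d·c|², |d'·c'|² ≤ |r|`, `|c₁·c'₂| < |r|/(|d||d'|)` and `|c₂·c'₁| < |r|/(|d||d'|)`,
then `d·c = d'·c'`, so `d = d'` and `c = c'`. -/
theorem stmt_17 (Fq : Type) [Field Fq] [Fintype Fq]
    (c c' : Fq[X] × Fq[X]) (hc : Primitive c) (hc' : Primitive c')
    (d d' : Fq[X]) (hd : d.Monic) (hd' : d'.Monic) :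
    (∀ r r' : Fq[X], ∀ a a' : Fq[X] × Fq[X],
      r.Monic → r'.Monic →
      Oabs2 a < Oabs r → CoprimeTriple a.1 a.2 r → OnLine d c r a →
      Oabs2 a' < Oabs r' → CoprimeTriple a'.1 a'.2 r' → OnLine d' c' r' a' →
      (max (Oabs (d * c.1)) (Oabs (d * c.2))) ^ 2 ≤ Oabs r →
      (max (Oabs (d' * c'.1)) (Oabs (d' * c'.2))) ^ 2 ≤ Oabs r' →
      max (Rabs (toR a.1 / toR r - toR a'.1 / toR r'))
          (Rabs (toR a.2 / toR r - toR a'.2 / toR r'))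
        < max (max (Oabs (d * c.1)) (Oabs (d * c.2)))
              (max (Oabs (d' * c'.1)) (Oabs (d' * c'.2))) / (Oabs r * Oabs r') →
      a.1 * r' = a'.1 * r ∧ a.2 * r' = a'.2 * r ∧ a = a' ∧ r = r') ∧
    (∀ r : Fq[X], ∀ a : Fq[X] × Fq[X],
      r.Monic → Oabs2 a < Oabs r → CoprimeTriple a.1 a.2 r →
      OnLine d c r a → OnLine d' c' r a →
      (max (Oabs (d * c.1)) (Oabs (d * c.2))) ^ 2 ≤ Oabs r →
      (max (Oabs (d' * c'.1)) (Oabs (d' * c'.2))) ^ 2 ≤ Oabs r →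
      Oabs (c.1 * c'.2) < Oabs r / (Oabs d * Oabs d') →
      Oabs (c.2 * c'.1) < Oabs r / (Oabs d * Oabs d') →
      d * c.1 = d' * c'.1 ∧ d * c.2 = d' * c'.2 ∧ d = d' ∧ c = c') := by
  refine ⟨fun r r' a a' hr hr' _ ha hl _ ha' hl' hN hN' hdist =>
    eq_of_onLine_of_dist_lt hc hc' hr hr' ha hl ha' hl' hN hN' hdist, ?_⟩
  intro r a hr _ ha hl hl' _ _ h₁₂ h₂₁
  obtain rfl : c = c' := hc.eq_of_mul_eq_mul hc' (mul_eq_mul_of_onLine_of_onLine ha hl hl' h₁₂ h₂₁)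
  obtain rfl : d = d' := hl.eq_of_onLine hd hd' hr.ne_zero hl'
  exact ⟨rfl, rfl, rfl, rfl⟩
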